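/- For the VRRW on ℤ and any x ∈ ℤ, almost surely on the event Υ(x), the limit α⁻_∞(x+2) := lim_n Z_n(x+1)/(Z_n(x+1)+Z_n(x+3)) exists and lies in [0,1); moreover on Υ(x) ∩ {α⁻_∞(x+2) > 0}, the event Υ(x+4) holds. -/

import Mathlib

open MeasureTheory Filter

/-- `Znum X n v ω` is `1` plus the number of visits of the walk `X` to the site
`v` up through time `n` (the quantity `Z_n(v)` of the paper), as a real number. -/
noncomputable def Znum {Ω : Type*} (X : ℕ → Ω → ℤ) (n : ℕ) (v : ℤ) (ω : Ω) : ℝ :=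
  1 + ∑ i ∈ Finset.range (n + 1), if X i ω = v then (1 : ℝ) else 0

/-- `Y_n(x)`: weighted number of visits to `x` up to time `n`. -/
noncomputable def Ynum {Ω : Type*} (X : ℕ → Ω → ℤ) (n : ℕ) (x : ℤ) (ω : Ω) : ℝ :=
  ∑ k ∈ Finset.Icc 1 n,
    (if X (k - 1) ω = x then (1 : ℝ) else 0) /
      (Znum X (k - 1) (x - 1) ω + Znum X (k - 1) (x + 1) ω)

/-- `Y⁺_n(x)`: weighted number of crossings from `x` to `x+1` up to time `n`. -/
noncomputable def Yplus {Ω : Type*} (X : ℕ → Ω → ℤ) (n : ℕ) (x : ℤ) (ω : Ω) : ℝ :=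
  ∑ k ∈ Finset.Icc 1 n,
    (if X (k - 1) ω = x ∧ X k ω = x + 1 then (1 : ℝ) else 0) / Znum X (k - 1) (x + 1) ω

/-- `Y⁻_n(x)`: weighted number of crossings from `x` to `x-1` up to time `n`. -/
noncomputable def Yminus {Ω : Type*} (X : ℕ → Ω → ℤ) (n : ℕ) (x : ℤ) (ω : Ω) : ℝ :=
  ∑ k ∈ Finset.Icc 1 n,
    (if X (k - 1) ω = x ∧ X k ω = x - 1 then (1 : ℝ) else 0) / Znum X (k - 1) (x - 1) ω

/-- The event `Υ(x) = {Y_∞(x) < ∞}` (the sums `Y_n(x)` are nondecreasing in `n`,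
so finiteness of the limit is boundedness). -/
def Upsilon {Ω : Type*} (X : ℕ → Ω → ℤ) (x : ℤ) : Set Ω :=
  {ω | BddAbove (Set.range fun n => Ynum X n x ω)}

/-- The event `Υ⁺(x) = {Y⁺_∞(x) < ∞}`. -/
def UpsilonPlus {Ω : Type*} (X : ℕ → Ω → ℤ) (x : ℤ) : Set Ω :=
  {ω | BddAbove (Set.range fun n => Yplus X n x ω)}

/-- The event `Υ⁻(x) = {Y⁻_∞(x) < ∞}`. -/
def UpsilonMinus {Ω : Type*} (X : ℕ → Ω → ℤ) (x : ℤ) : Set Ω :=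
  {ω | BddAbove (Set.range fun n => Yminus X n x ω)}

/-- `α⁻_n(y) = Z_n(y-1)/(Z_n(y-1) + Z_n(y+1))`. -/
noncomputable def alphaMinus {Ω : Type*} (X : ℕ → Ω → ℤ) (n : ℕ) (y : ℤ) (ω : Ω) : ℝ :=
  Znum X n (y - 1) ω / (Znum X n (y - 1) ω + Znum X n (y + 1) ω)

/-- `(X_n)` is a vertex-reinforced random walk on `ℤ` started at `v0`:
it is adapted, starts at `v0`, a.s. makes nearest-neighbor steps, and the
conditional law of each step is proportional to the augmented occupations of
the two neighbors. -/
structure IsVRRW {Ω : Type*} {m0 : MeasurableSpace Ω} (μ : Measure Ω)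
    (ℱ : Filtration ℕ m0) (X : ℕ → Ω → ℤ) (v0 : ℤ) : Prop where
  adapted : Adapted ℱ X
  init : ∀ ω, X 0 ω = v0
  nearest : ∀ n, ∀ᵐ ω ∂μ, X (n + 1) ω = X n ω + 1 ∨ X (n + 1) ω = X n ω - 1
  step : ∀ n, ∀ᵐ ω ∂μ, ∀ x : ℤ,
    (μ[Set.indicator {ω' | X (n + 1) ω' = x} (fun _ => (1 : ℝ)) | ℱ n]) ω =
      if x = X n ω + 1 ∨ x = X n ω - 1 then
        Znum X n x ω / (Znum X n (X n ω - 1) ω + Znum X n (X n ω + 1) ω)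
      else 0


/-! Since the step law gives a crossing from `y` to a neighbour `t` probability
`Z_n(t) / (Z_n(y - 1) + Z_n(y + 1))`, the weighted crossing counts `Y⁺(y)`, `Y⁻(y)` and the weighted
visit count `Y(y)` all have the same compensator. Hence `Y⁺(y) - Y(y)` and `Y⁻(y) - Y(y)` are
martingales with bounded increments, and `Y⁻(y) - Y⁺(y)` is an `L²`-bounded martingale because
`∑ (1 / Z_k(v))²` over the arrivals at `v` is at most `2`. The same square-summability shows that
`log Z_n(v) - Y⁺_n(v - 1) - Y⁻_n(v + 1)` converges along any nearest-neighbour path.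

On `Υ(x)` the first martingale makes `Y⁺(x)` converge; together with the convergence of
`Y⁻(x + 2) - Y⁺(x + 2)` this shows that `log (Z_n(x + 3) / Z_n(x + 1)) - Y⁻_n(x + 4)` converges.
So `α⁻_n(x + 2) = 1 / (1 + Z_n(x + 3) / Z_n(x + 1))` has a limit in `[0, 1)`, which is positive only
if `Y⁻(x + 4)` stays bounded, and then `Υ(x + 4)` holds by the second martingale. -/

open Topology

section Path

variable {Ω : Type*} {X : ℕ → Ω → ℤ}

lemma one_le_Znum (n : ℕ) (v : ℤ) (ω : Ω) : 1 ≤ Znum X n v ω := by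
  unfold Znum
  linarith [Finset.sum_nonneg fun i (_ : i ∈ Finset.range (n + 1)) =>
    (by positivity : (0 : ℝ) ≤ if X i ω = v then 1 else 0)]

lemma Znum_pos (n : ℕ) (v : ℤ) (ω : Ω) : 0 < Znum X n v ω :=
  one_pos.trans_le (one_le_Znum n v ω)

lemma Znum_succ (n : ℕ) (v : ℤ) (ω : Ω) :
    Znum X (n + 1) v ω = Znum X n v ω + if X (n + 1) ω = v then 1 else 0 := by
  rw [Znum, Znum, Finset.sum_range_succ _ (n + 1)]
  ring

lemma ite_one_zero_div_mem_Icc (p : Prop) [Decidable p] {d : ℝ} (hd : 1 ≤ d) :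
    (if p then (1 : ℝ) else 0) / d ∈ Set.Icc (0 : ℝ) 1 := by
  split_ifs
  · exact ⟨by positivity, (div_le_one (by linarith)).2 hd⟩
  · simp

noncomputable def dYplus (X : ℕ → Ω → ℤ) (n : ℕ) (y : ℤ) (ω : Ω) : ℝ :=
  (if X n ω = y ∧ X (n + 1) ω = y + 1 then (1 : ℝ) else 0) / Znum X n (y + 1) ω

noncomputable def dYminus (X : ℕ → Ω → ℤ) (n : ℕ) (y : ℤ) (ω : Ω) : ℝ :=
  (if X n ω = y ∧ X (n + 1) ω = y - 1 then (1 : ℝ) else 0) / Znum X n (y - 1) ω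

noncomputable def dYnum (X : ℕ → Ω → ℤ) (n : ℕ) (y : ℤ) (ω : Ω) : ℝ :=
  (if X n ω = y then (1 : ℝ) else 0) / (Znum X n (y - 1) ω + Znum X n (y + 1) ω)

noncomputable def dZrel (X : ℕ → Ω → ℤ) (n : ℕ) (v : ℤ) (ω : Ω) : ℝ :=
  (if X (n + 1) ω = v then (1 : ℝ) else 0) / Znum X n v ω

lemma dYplus_mem_Icc (n : ℕ) (y : ℤ) (ω : Ω) : dYplus X n y ω ∈ Set.Icc (0 : ℝ) 1 :=
  ite_one_zero_div_mem_Icc _ (one_le_Znum n _ ω)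

lemma dYminus_mem_Icc (n : ℕ) (y : ℤ) (ω : Ω) : dYminus X n y ω ∈ Set.Icc (0 : ℝ) 1 :=
  ite_one_zero_div_mem_Icc _ (one_le_Znum n _ ω)

lemma dYnum_mem_Icc (n : ℕ) (y : ℤ) (ω : Ω) : dYnum X n y ω ∈ Set.Icc (0 : ℝ) 1 := by
  have := one_le_Znum (X := X) n (y - 1) ω
  have := one_le_Znum (X := X) n (y + 1) ω
  exact ite_one_zero_div_mem_Icc _ (by linarith)

lemma dZrel_nonneg (n : ℕ) (v : ℤ) (ω : Ω) : 0 ≤ dZrel X n v ω :=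
  (ite_one_zero_div_mem_Icc _ (one_le_Znum n v ω)).1

lemma sum_Icc_one_eq_sum_range (f : ℕ → ℝ) (n : ℕ) :
    ∑ k ∈ Finset.Icc 1 n, f (k - 1) = ∑ k ∈ Finset.range n, f k := by
  induction n with
  | zero => simp
  | succ n ih => rw [Finset.sum_Icc_succ_top (by omega), ih, Finset.sum_range_succ,
      Nat.add_sub_cancel]

lemma Yplus_eq_sum (n : ℕ) (y : ℤ) (ω : Ω) :
    Yplus X n y ω = ∑ k ∈ Finset.range n, dYplus X k y ω := by
  rw [← sum_Icc_one_eq_sum_range]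
  refine Finset.sum_congr rfl fun k hk => ?_
  rw [dYplus, Nat.sub_add_cancel (Finset.mem_Icc.1 hk).1]

lemma Yminus_eq_sum (n : ℕ) (y : ℤ) (ω : Ω) :
    Yminus X n y ω = ∑ k ∈ Finset.range n, dYminus X k y ω := by
  rw [← sum_Icc_one_eq_sum_range]
  refine Finset.sum_congr rfl fun k hk => ?_
  rw [dYminus, Nat.sub_add_cancel (Finset.mem_Icc.1 hk).1]

lemma Ynum_eq_sum (n : ℕ) (y : ℤ) (ω : Ω) :
    Ynum X n y ω = ∑ k ∈ Finset.range n, dYnum X k y ω :=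
  sum_Icc_one_eq_sum_range (fun k => dYnum X k y ω) n

lemma Yplus_mono (y : ℤ) (ω : Ω) : Monotone fun n => Yplus X n y ω := by
  simp only [Yplus_eq_sum]
  exact monotone_nat_of_le_succ fun n => by
    rw [Finset.sum_range_succ]; linarith [(dYplus_mem_Icc (X := X) n y ω).1]

lemma Yminus_mono (y : ℤ) (ω : Ω) : Monotone fun n => Yminus X n y ω := by
  simp only [Yminus_eq_sum]
  exact monotone_nat_of_le_succ fun n => by
    rw [Finset.sum_range_succ]; linarith [(dYminus_mem_Icc (X := X) n y ω).1]

end Path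

section Measurability

variable {Ω : Type*} {m0 : MeasurableSpace Ω} {ℱ : Filtration ℕ m0} {X : ℕ → Ω → ℤ}

lemma measurableSet_eq_of_adapted (hX : Adapted ℱ X) {i n : ℕ} (hin : i ≤ n) (v : ℤ) :
    MeasurableSet[ℱ n] {ω | X i ω = v} :=
  (hX i).mono (ℱ.mono hin) le_rfl (measurableSet_singleton v)

lemma measurable_Znum (hX : Adapted ℱ X) {m n : ℕ} (hmn : m ≤ n) (v : ℤ) :
    Measurable[ℱ n] (Znum X m v) :=
  measurable_const.add <| Finset.measurable_sum _ fun _ hi =>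
    Measurable.ite (measurableSet_eq_of_adapted hX
      ((Finset.mem_range_succ_iff.1 hi).trans hmn) v) measurable_const measurable_const

lemma measurable_dYplus (hX : Adapted ℱ X) (n : ℕ) (y : ℤ) :
    Measurable[ℱ (n + 1)] (dYplus X n y) :=
  (Measurable.ite ((measurableSet_eq_of_adapted hX n.le_succ y).inter
    (measurableSet_eq_of_adapted hX le_rfl (y + 1))) measurable_const measurable_const).div
    (measurable_Znum hX n.le_succ _)

lemma measurable_dYminus (hX : Adapted ℱ X) (n : ℕ) (y : ℤ) :
    Measurable[ℱ (n + 1)] (dYminus X n y) :=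
  (Measurable.ite ((measurableSet_eq_of_adapted hX n.le_succ y).inter
    (measurableSet_eq_of_adapted hX le_rfl (y - 1))) measurable_const measurable_const).div
    (measurable_Znum hX n.le_succ _)

lemma measurable_dYnum (hX : Adapted ℱ X) (n : ℕ) (y : ℤ) :
    Measurable[ℱ n] (dYnum X n y) :=
  (Measurable.ite (measurableSet_eq_of_adapted hX le_rfl y) measurable_const
    measurable_const).div ((measurable_Znum hX le_rfl _).add (measurable_Znum hX le_rfl _))

end Measurability

section StepLaw

variable {Ω : Type*} {m0 : MeasurableSpace Ω} {μ : Measure Ω} [IsFiniteMeasure μ]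
  {ℱ : Filtration ℕ m0} {X : ℕ → Ω → ℤ} {v0 : ℤ}

lemma integrable_of_mem_Icc {f : Ω → ℝ} (hf : Measurable f) {a b : ℝ}
    (hab : ∀ ω, f ω ∈ Set.Icc a b) : Integrable f μ :=
  (memLp_of_bounded (ae_of_all _ hab) hf.aestronglyMeasurable 1).integrable le_rfl

/-- The weight `1 / Z_n(t)` cancels the probability `Z_n(t) / (Z_n(y - 1) + Z_n(y + 1))` of
stepping from `y` to `t`. -/
lemma condExp_crossing (h : IsVRRW μ ℱ X v0) (n : ℕ) (y t : ℤ) (ht : t = y + 1 ∨ t = y - 1) :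
    μ[fun ω => (if X n ω = y ∧ X (n + 1) ω = t then (1 : ℝ) else 0) / Znum X n t ω | ℱ n]
      =ᵐ[μ] dYnum X n y := by
  set F : Ω → ℝ := fun ω => (if X n ω = y then (1 : ℝ) else 0) / Znum X n t ω
  set G : Ω → ℝ := Set.indicator {ω | X (n + 1) ω = t} fun _ => 1
  have hFG : (fun ω => (if X n ω = y ∧ X (n + 1) ω = t then (1 : ℝ) else 0) / Znum X n t ω)
      = F * G := by
    funext ω
    by_cases h1 : X n ω = y <;> by_cases h2 : X (n + 1) ω = t <;> simp [F, G, h1, h2]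
  have hF : Measurable[ℱ n] F :=
    (Measurable.ite (measurableSet_eq_of_adapted h.adapted le_rfl y) measurable_const
      measurable_const).div (measurable_Znum h.adapted le_rfl t)
  have hG : Measurable G := measurable_const.indicator
    (ℱ.le (n + 1) _ (measurableSet_eq_of_adapted h.adapted le_rfl t))
  have hG01 : ∀ ω, G ω ∈ Set.Icc (0 : ℝ) 1 := fun ω => by
    by_cases h2 : X (n + 1) ω = t <;> simp [G, h2]
  have hF01 : ∀ ω, F ω ∈ Set.Icc (0 : ℝ) 1 := fun ω =>
    ite_one_zero_div_mem_Icc _ (one_le_Znum n t ω)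
  have hFGint : Integrable (F * G) μ := integrable_of_mem_Icc ((hF.mono (ℱ.le n) le_rfl).mul hG)
    fun ω => ⟨mul_nonneg (hF01 ω).1 (hG01 ω).1, mul_le_one₀ (hF01 ω).2 (hG01 ω).1 (hG01 ω).2⟩
  rw [hFG]
  filter_upwards [condExp_mul_of_stronglyMeasurable_left hF.stronglyMeasurable hFGint
    (integrable_of_mem_Icc hG hG01), h.step n] with ω hmul hstep
  rw [hmul, Pi.mul_apply, hstep t]
  by_cases hy : X n ω = y
  · subst hy
    have hZ := Znum_pos (X := X) n t ω
    simp only [F, dYnum, if_true, ht]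
    field_simp
  · simp [F, dYnum, hy]

lemma condExp_dYplus (h : IsVRRW μ ℱ X v0) (n : ℕ) (y : ℤ) :
    μ[dYplus X n y | ℱ n] =ᵐ[μ] dYnum X n y :=
  condExp_crossing h n y (y + 1) (Or.inl rfl)

lemma condExp_dYminus (h : IsVRRW μ ℱ X v0) (n : ℕ) (y : ℤ) :
    μ[dYminus X n y | ℱ n] =ᵐ[μ] dYnum X n y :=
  condExp_crossing h n y (y - 1) (Or.inr rfl)

end StepLaw

lemma condExp_sub_ae_eq_zero {Ω : Type*} {m m0 : MeasurableSpace Ω} {μ : Measure Ω}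
    {f g h : Ω → ℝ} (hf : Integrable f μ) (hg : Integrable g μ) (hfh : μ[f | m] =ᵐ[μ] h)
    (hgh : μ[g | m] =ᵐ[μ] h) : μ[f - g | m] =ᵐ[μ] 0 :=
  (condExp_sub hf hg m).trans <| by filter_upwards [hfh, hgh] with ω h1 h2; simp [h1, h2]

section IncrementSums

variable {Ω : Type*} {m0 : MeasurableSpace Ω} {μ : Measure Ω} [IsFiniteMeasure μ]
  {ℱ : Filtration ℕ m0} {ξ : ℕ → Ω → ℝ}

lemma measurable_sum_range (hmeas : ∀ k, Measurable[ℱ (k + 1)] (ξ k)) (n : ℕ) :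
    Measurable[ℱ n] fun ω => ∑ k ∈ Finset.range n, ξ k ω :=
  Finset.measurable_sum _ fun k hk => (hmeas k).mono (ℱ.mono (Finset.mem_range.1 hk)) le_rfl

lemma martingale_sum_range (hmeas : ∀ k, Measurable[ℱ (k + 1)] (ξ k))
    (hint : ∀ k, Integrable (ξ k) μ) (hcond : ∀ k, μ[ξ k | ℱ k] =ᵐ[μ] 0) :
    Martingale (fun n ω => ∑ k ∈ Finset.range n, ξ k ω) ℱ μ := by
  refine martingale_of_condExp_sub_eq_zero_nat
    (fun n => (measurable_sum_range hmeas n).stronglyMeasurable)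
    (fun n => integrable_finsetSum _ fun k _ => hint k) fun n => ?_
  convert hcond n using 2
  funext ω
  simp [Finset.sum_range_succ]

lemma integral_sq_sum_range (hmeas : ∀ k, Measurable[ℱ (k + 1)] (ξ k))
    (hL2 : ∀ k, MemLp (ξ k) 2 μ) (hcond : ∀ k, μ[ξ k | ℱ k] =ᵐ[μ] 0) (n : ℕ) :
    ∫ ω, (∑ k ∈ Finset.range n, ξ k ω) ^ 2 ∂μ = ∑ k ∈ Finset.range n, ∫ ω, ξ k ω ^ 2 ∂μ := by
  induction n with
  | zero => simp
  | succ n ih =>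
    set S : Ω → ℝ := fun ω => ∑ k ∈ Finset.range n, ξ k ω
    have hS : MemLp S 2 μ := memLp_finsetSum _ fun k _ => hL2 k
    have hSξ : Integrable (S * ξ n) μ := hS.integrable_mul (hL2 n)
    have horth : ∫ ω, S ω * ξ n ω ∂μ = 0 := by
      rw [← integral_condExp (ℱ.le n)]
      refine integral_eq_zero_of_ae ((condExp_mul_of_stronglyMeasurable_left
        (measurable_sum_range hmeas n).stronglyMeasurable hSξ
        ((hL2 n).integrable one_le_two)).trans ?_)
      filter_upwards [hcond n] with ω hω
      simp [hω]
    have hexpand : (fun ω => (∑ k ∈ Finset.range (n + 1), ξ k ω) ^ 2)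
        = fun ω => S ω ^ 2 + (2 * (S ω * ξ n ω) + ξ n ω ^ 2) := by
      funext ω
      simp only [S, Finset.sum_range_succ]
      ring
    have h2Sξ : Integrable (fun ω => 2 * (S ω * ξ n ω)) μ := hSξ.const_mul 2
    have hrest : Integrable (fun ω => 2 * (S ω * ξ n ω) + ξ n ω ^ 2) μ :=
      h2Sξ.add (hL2 n).integrable_sq
    rw [hexpand, integral_add hS.integrable_sq hrest,
      integral_add h2Sξ (hL2 n).integrable_sq, integral_const_mul, horth, ih,
      Finset.sum_range_succ]
    ring

lemma ae_exists_tendsto_sum_range (hmeas : ∀ k, Measurable[ℱ (k + 1)] (ξ k))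
    (hL2 : ∀ k, MemLp (ξ k) 2 μ) (hcond : ∀ k, μ[ξ k | ℱ k] =ᵐ[μ] 0) {R : ℝ}
    (hR : ∀ n, ∑ k ∈ Finset.range n, ∫ ω, ξ k ω ^ 2 ∂μ ≤ R) :
    ∀ᵐ ω ∂μ, ∃ c, Tendsto (fun n => ∑ k ∈ Finset.range n, ξ k ω) atTop (𝓝 c) := by
  refine (martingale_sum_range hmeas (fun k => (hL2 k).integrable one_le_two) hcond).submartingale
    |>.exists_ae_tendsto_of_bdd (R := ((μ.real Set.univ + R) / 2).toNNReal) fun n => ?_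
  set S : Ω → ℝ := fun ω => ∑ k ∈ Finset.range n, ξ k ω
  have hS : MemLp S 2 μ := memLp_finsetSum _ fun k _ => hL2 k
  have hSint : Integrable S μ := hS.integrable one_le_two
  have hL1 : ∫ ω, ‖S ω‖ ∂μ ≤ (μ.real Set.univ + R) / 2 :=
    calc ∫ ω, ‖S ω‖ ∂μ ≤ ∫ ω, (1 + S ω ^ 2) / 2 ∂μ := by
          refine integral_mono hSint.norm (((integrable_const 1).add hS.integrable_sq).div_const 2)
            fun ω => ?_
          nlinarith [sq_nonneg (|S ω| - 1), sq_abs (S ω), Real.norm_eq_abs (S ω)]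
      _ = (μ.real Set.univ + ∫ ω, S ω ^ 2 ∂μ) / 2 := by
          rw [integral_div, integral_add (integrable_const 1) hS.integrable_sq]
          simp
      _ ≤ (μ.real Set.univ + R) / 2 := by
          rw [integral_sq_sum_range hmeas hL2 hcond n]
          linarith [hR n]
  rw [eLpNorm_one_eq_lintegral_enorm, ← ofReal_integral_norm_eq_lintegral_enorm hSint]
  exact ENNReal.ofReal_le_ofReal hL1

/-- The partial sums of `a - b` form a martingale with bounded increments, which converges
wherever it is bounded above. -/
lemma ae_bddAbove_sum_range_of_bddAbove {a b : ℕ → Ω → ℝ}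
    (ha : ∀ k, Measurable[ℱ (k + 1)] (a k)) (hb : ∀ k, Measurable[ℱ (k + 1)] (b k))
    (ha01 : ∀ k ω, a k ω ∈ Set.Icc (0 : ℝ) 1) (hb01 : ∀ k ω, b k ω ∈ Set.Icc (0 : ℝ) 1)
    (hcond : ∀ k, μ[a k - b k | ℱ k] =ᵐ[μ] 0) :
    ∀ᵐ ω ∂μ, BddAbove (Set.range fun n => ∑ k ∈ Finset.range n, a k ω) →
      BddAbove (Set.range fun n => ∑ k ∈ Finset.range n, b k ω) := by
  have hab : ∀ k ω, (a k - b k) ω ∈ Set.Icc (-1 : ℝ) 1 := fun k ω => by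
    rw [Pi.sub_apply]
    constructor <;> linarith [(ha01 k ω).1, (ha01 k ω).2, (hb01 k ω).1, (hb01 k ω).2]
  have hM := martingale_sum_range (fun k => (ha k).sub (hb k))
    (fun k => integrable_of_mem_Icc (((ha k).sub (hb k)).mono (ℱ.le _) le_rfl) (hab k)) hcond
  have hinc : ∀ᵐ ω ∂μ, ∀ n, |∑ k ∈ Finset.range (n + 1), (a k - b k) ω
      - ∑ k ∈ Finset.range n, (a k - b k) ω| ≤ ((1 : NNReal) : ℝ) := ae_of_all _ fun ω n => by
    rw [Finset.sum_range_succ_sub_sum, NNReal.coe_one, abs_le]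
    exact hab n ω
  filter_upwards [hM.submartingale.bddAbove_iff_exists_tendsto hinc] with ω hconv ⟨c, hc⟩
  have hA : ∀ n, ∑ k ∈ Finset.range n, a k ω ≤ c := fun n => hc ⟨n, rfl⟩
  have hB : ∀ n, 0 ≤ ∑ k ∈ Finset.range n, b k ω := fun n =>
    Finset.sum_nonneg fun k _ => (hb01 k ω).1
  have hM_eq : ∀ n, ∑ k ∈ Finset.range n, (a k - b k) ω
      = ∑ k ∈ Finset.range n, a k ω - ∑ k ∈ Finset.range n, b k ω := fun n => by
    simp [Finset.sum_sub_distrib]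
  obtain ⟨L, hL⟩ := hconv.1 ⟨c, by
    rintro _ ⟨n, rfl⟩
    simp only [hM_eq]
    linarith [hA n, hB n]⟩
  obtain ⟨m, hm⟩ := hL.bddBelow_range
  refine ⟨c - m, ?_⟩
  rintro _ ⟨n, rfl⟩
  have := hm ⟨n, rfl⟩
  simp only [hM_eq] at this
  linarith [hA n]

end IncrementSums

section Occupation

variable {Ω : Type*} {X : ℕ → Ω → ℤ}

lemma Znum_succ_eq_mul (n : ℕ) (v : ℤ) (ω : Ω) :
    Znum X (n + 1) v ω = Znum X n v ω * (1 + dZrel X n v ω) := by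
  have := Znum_pos (X := X) n v ω
  rw [Znum_succ, dZrel]
  field_simp

/-- Telescoping `1 / z² ≤ 2 / z - 2 / (z + 1)` for `z ≥ 1`. -/
lemma sum_range_dZrel_sq_le (n : ℕ) (v : ℤ) (ω : Ω) :
    ∑ k ∈ Finset.range n, dZrel X k v ω ^ 2 ≤ 2 - 2 / Znum X n v ω := by
  induction n with
  | zero =>
    have := one_le_Znum (X := X) 0 v ω
    simp only [Finset.sum_range_zero, sub_nonneg]
    rw [div_le_iff₀ (by linarith)]
    linarith
  | succ n ih =>
    have hz := one_le_Znum (X := X) n v ω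
    rw [Finset.sum_range_succ, Znum_succ, dZrel]
    split_ifs
    · have key : (1 / Znum X n v ω) ^ 2 ≤ 2 / Znum X n v ω - 2 / (Znum X n v ω + 1) := by
        rw [div_sub_div _ _ (by positivity) (by positivity), div_pow, one_pow,
          div_le_div_iff₀ (by positivity) (by positivity)]
        nlinarith
      linarith
    · simpa using ih

lemma sum_range_dZrel_sq_le_two (n : ℕ) (v : ℤ) (ω : Ω) :
    ∑ k ∈ Finset.range n, dZrel X k v ω ^ 2 ≤ 2 := by
  have := Znum_pos (X := X) n v ω
  linarith [sum_range_dZrel_sq_le (X := X) n v ω, div_pos two_pos this]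

lemma log_Znum_eq_sum (n : ℕ) (v : ℤ) (ω : Ω) :
    Real.log (Znum X n v ω)
      = Real.log (Znum X 0 v ω) + ∑ k ∈ Finset.range n, Real.log (1 + dZrel X k v ω) := by
  induction n with
  | zero => simp
  | succ n ih =>
    rw [Znum_succ_eq_mul, Real.log_mul (Znum_pos n v ω).ne'
      (by linarith [dZrel_nonneg (X := X) n v ω]), ih, Finset.sum_range_succ, add_assoc]

/-- Every arrival at `v` of a nearest-neighbour path is a crossing from `v - 1` or `v + 1`. -/
lemma dYplus_add_dYminus_eq_dZrel {n : ℕ} {ω : Ω}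
    (hnear : X (n + 1) ω = X n ω + 1 ∨ X (n + 1) ω = X n ω - 1) (v : ℤ) :
    dYplus X n (v - 1) ω + dYminus X n (v + 1) ω = dZrel X n v ω := by
  simp only [dYplus, dYminus, dZrel, sub_add_cancel, add_sub_cancel_right, ← add_div]
  congr 1
  by_cases hv : X (n + 1) ω = v
  · rcases hnear with h | h
    · simp [hv, show X n ω = v - 1 by omega]
      omega
    · simp [hv, show X n ω = v + 1 by omega]
      omega
  · simp [hv]

lemma dYminus_le_dZrel (n : ℕ) (z : ℤ) (ω : Ω) : dYminus X n z ω ≤ dZrel X n (z - 1) ω := by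
  refine div_le_div_of_nonneg_right ?_ (Znum_pos n (z - 1) ω).le
  split_ifs <;> simp_all

lemma dYplus_le_dZrel (n : ℕ) (z : ℤ) (ω : Ω) : dYplus X n z ω ≤ dZrel X n (z + 1) ω := by
  refine div_le_div_of_nonneg_right ?_ (Znum_pos n (z + 1) ω).le
  split_ifs <;> simp_all

lemma dYminus_mul_dYplus (n : ℕ) (z : ℤ) (ω : Ω) : dYminus X n z ω * dYplus X n z ω = 0 := by
  unfold dYminus dYplus
  by_cases h : X (n + 1) ω = z - 1
  · have : X (n + 1) ω ≠ z + 1 := by omega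
    simp [this]
  · simp [h]

lemma sum_range_sq_dYminus_sub_dYplus_le (n : ℕ) (z : ℤ) (ω : Ω) :
    ∑ k ∈ Finset.range n, (dYminus X k z ω - dYplus X k z ω) ^ 2 ≤ 4 := by
  calc ∑ k ∈ Finset.range n, (dYminus X k z ω - dYplus X k z ω) ^ 2
      ≤ ∑ k ∈ Finset.range n, (dZrel X k (z - 1) ω ^ 2 + dZrel X k (z + 1) ω ^ 2) := by
        refine Finset.sum_le_sum fun k _ => ?_
        have hm := pow_le_pow_left₀ (dYminus_mem_Icc k z ω).1 (dYminus_le_dZrel (X := X) k z ω) 2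
        have hp := pow_le_pow_left₀ (dYplus_mem_Icc k z ω).1 (dYplus_le_dZrel (X := X) k z ω) 2
        nlinarith [dYminus_mul_dYplus (X := X) k z ω]
    _ ≤ 2 + 2 := by
        rw [Finset.sum_add_distrib]
        exact add_le_add (sum_range_dZrel_sq_le_two n _ ω) (sum_range_dZrel_sq_le_two n _ ω)
    _ = 4 := by norm_num

end Occupation

lemma abs_log_one_add_sub_le {a : ℝ} (ha : 0 ≤ a) : |Real.log (1 + a) - a| ≤ a ^ 2 := by
  have hpos : 0 < 1 + a := by linarith
  have hupper := Real.log_le_sub_one_of_pos hpos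
  have hlower := Real.one_sub_inv_le_log_of_pos hpos
  have hfrac : a - a ^ 2 ≤ 1 - (1 + a)⁻¹ := by
    rw [show 1 - (1 + a)⁻¹ = a / (1 + a) by field_simp; ring, le_div_iff₀ hpos]
    nlinarith [pow_nonneg ha 3]
  rw [abs_le]
  constructor <;> nlinarith

lemma exists_tendsto_sum_log_one_add_sub {a : ℕ → ℝ} {C : ℝ} (ha : ∀ n, 0 ≤ a n)
    (hsq : ∀ n, ∑ k ∈ Finset.range n, a k ^ 2 ≤ C) :
    ∃ c, Tendsto (fun n => ∑ k ∈ Finset.range n, (Real.log (1 + a k) - a k)) atTop (𝓝 c) :=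
  ⟨_, ((summable_of_sum_range_le (fun n => sq_nonneg (a n)) hsq).of_norm_bounded
    fun n => abs_log_one_add_sub_le (ha n)).hasSum.tendsto_sum_nat⟩

lemma exists_tendsto_inv_one_add_exp {c y : ℕ → ℝ} {c₀ : ℝ} (hc : Tendsto c atTop (𝓝 c₀))
    (hy : Monotone y) :
    ∃ l ∈ Set.Ico (0 : ℝ) 1, Tendsto (fun n => (1 + Real.exp (c n + y n))⁻¹) atTop (𝓝 l) ∧
      (0 < l → BddAbove (Set.range y)) := by
  by_cases hb : BddAbove (Set.range y)
  · have hlim := (hc.add (tendsto_atTop_ciSup hy hb)).rexp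
    refine ⟨(1 + Real.exp (c₀ + ⨆ n, y n))⁻¹, ⟨by positivity, ?_⟩,
      (tendsto_const_nhds.add hlim).inv₀ (by positivity), fun _ => hb⟩
    exact inv_lt_one_of_one_lt₀ (by linarith [Real.exp_pos (c₀ + ⨆ n, y n)])
  · have hlim : Tendsto (fun n => 1 + Real.exp (c n + y n)) atTop atTop :=
      tendsto_atTop_add_const_left _ _ <| Real.tendsto_exp_atTop.comp <|
        hc.add_atTop (tendsto_atTop_atTop_of_monotone' hy hb)
    exact ⟨0, ⟨le_rfl, one_pos⟩, hlim.inv_tendsto_atTop, fun h => absurd h (lt_irrefl 0)⟩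

section Events

variable {Ω : Type*} {m0 : MeasurableSpace Ω} {μ : Measure Ω} [IsFiniteMeasure μ]
  {ℱ : Filtration ℕ m0} {X : ℕ → Ω → ℤ} {v0 : ℤ}

lemma integrable_dYplus (hX : Adapted ℱ X) (n : ℕ) (y : ℤ) : Integrable (dYplus X n y) μ :=
  integrable_of_mem_Icc ((measurable_dYplus hX n y).mono (ℱ.le _) le_rfl) (dYplus_mem_Icc n y)

lemma integrable_dYminus (hX : Adapted ℱ X) (n : ℕ) (y : ℤ) : Integrable (dYminus X n y) μ :=
  integrable_of_mem_Icc ((measurable_dYminus hX n y).mono (ℱ.le _) le_rfl) (dYminus_mem_Icc n y)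

lemma integrable_dYnum (hX : Adapted ℱ X) (n : ℕ) (y : ℤ) : Integrable (dYnum X n y) μ :=
  integrable_of_mem_Icc ((measurable_dYnum hX n y).mono (ℱ.le _) le_rfl) (dYnum_mem_Icc n y)

lemma condExp_dYnum (hX : Adapted ℱ X) (n : ℕ) (y : ℤ) :
    μ[dYnum X n y | ℱ n] =ᵐ[μ] dYnum X n y := by
  rw [condExp_of_stronglyMeasurable (ℱ.le n) (measurable_dYnum hX n y).stronglyMeasurable
    (integrable_dYnum hX n y)]

lemma ae_bddAbove_Yplus_of_mem_Upsilon (h : IsVRRW μ ℱ X v0) (y : ℤ) :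
    ∀ᵐ ω ∂μ, ω ∈ Upsilon X y → BddAbove (Set.range fun n => Yplus X n y ω) := by
  have := ae_bddAbove_sum_range_of_bddAbove (μ := μ)
    (fun k => (measurable_dYnum h.adapted k y).mono (ℱ.mono k.le_succ) le_rfl)
    (measurable_dYplus h.adapted · y) (dYnum_mem_Icc · y) (dYplus_mem_Icc · y)
    fun k => condExp_sub_ae_eq_zero (integrable_dYnum h.adapted k y)
      (integrable_dYplus h.adapted k y) (condExp_dYnum h.adapted k y) (condExp_dYplus h k y)
  simpa only [Upsilon, Set.mem_ofPred_eq, Ynum_eq_sum, Yplus_eq_sum] using this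

lemma ae_mem_Upsilon_of_bddAbove_Yminus (h : IsVRRW μ ℱ X v0) (y : ℤ) :
    ∀ᵐ ω ∂μ, BddAbove (Set.range fun n => Yminus X n y ω) → ω ∈ Upsilon X y := by
  have := ae_bddAbove_sum_range_of_bddAbove (μ := μ) (measurable_dYminus h.adapted · y)
    (fun k => (measurable_dYnum h.adapted k y).mono (ℱ.mono k.le_succ) le_rfl)
    (dYminus_mem_Icc · y) (dYnum_mem_Icc · y)
    fun k => condExp_sub_ae_eq_zero (integrable_dYminus h.adapted k y)
      (integrable_dYnum h.adapted k y) (condExp_dYminus h k y) (condExp_dYnum h.adapted k y)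
  simpa only [Upsilon, Set.mem_ofPred_eq, Ynum_eq_sum, Yminus_eq_sum] using this

lemma ae_exists_tendsto_Yminus_sub_Yplus (h : IsVRRW μ ℱ X v0) (z : ℤ) :
    ∀ᵐ ω ∂μ, ∃ c, Tendsto (fun n => Yminus X n z ω - Yplus X n z ω) atTop (𝓝 c) := by
  set ξ : ℕ → Ω → ℝ := fun k => dYminus X k z - dYplus X k z
  have hmeas : ∀ k, Measurable[ℱ (k + 1)] (ξ k) := fun k =>
    (measurable_dYminus h.adapted k z).sub (measurable_dYplus h.adapted k z)
  have hL2 : ∀ k, MemLp (ξ k) 2 μ := fun k =>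
    memLp_of_bounded (a := -1) (b := 1) (ae_of_all _ fun ω => by
      simp only [ξ, Pi.sub_apply]
      have hm := dYminus_mem_Icc (X := X) k z ω
      have hp := dYplus_mem_Icc (X := X) k z ω
      constructor <;> linarith [hm.1, hm.2, hp.1, hp.2])
      ((hmeas k).mono (ℱ.le _) le_rfl).aestronglyMeasurable 2
  have hcond : ∀ k, μ[ξ k | ℱ k] =ᵐ[μ] 0 := fun k =>
    condExp_sub_ae_eq_zero (integrable_dYminus h.adapted k z) (integrable_dYplus h.adapted k z)
      (condExp_dYminus h k z) (condExp_dYplus h k z)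
  have hR : ∀ n, ∑ k ∈ Finset.range n, ∫ ω, ξ k ω ^ 2 ∂μ ≤ 4 * μ.real Set.univ := fun n => by
    rw [← integral_finsetSum _ fun k _ => (hL2 k).integrable_sq]
    calc ∫ ω, ∑ k ∈ Finset.range n, ξ k ω ^ 2 ∂μ ≤ ∫ _, (4 : ℝ) ∂μ :=
          integral_mono (integrable_finsetSum _ fun k _ => (hL2 k).integrable_sq)
            (integrable_const 4) fun ω => sum_range_sq_dYminus_sub_dYplus_le n z ω
      _ = 4 * μ.real Set.univ := by simp [mul_comm]
  filter_upwards [ae_exists_tendsto_sum_range hmeas hL2 hcond hR] with ω ⟨c, hc⟩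
  exact ⟨c, by simpa only [ξ, Pi.sub_apply, Finset.sum_sub_distrib, ← Yminus_eq_sum,
    ← Yplus_eq_sum] using hc⟩

end Events

section NearestNeighbour

variable {Ω : Type*} {X : ℕ → Ω → ℤ} {ω : Ω}

lemma exists_tendsto_log_Znum_sub_crossings
    (hnear : ∀ k, X (k + 1) ω = X k ω + 1 ∨ X (k + 1) ω = X k ω - 1) (v : ℤ) :
    ∃ c, Tendsto (fun n => Real.log (Znum X n v ω) - (Yplus X n (v - 1) ω + Yminus X n (v + 1) ω))
      atTop (𝓝 c) := by
  obtain ⟨c, hc⟩ := exists_tendsto_sum_log_one_add_sub (dZrel_nonneg (X := X) · v ω)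
    (sum_range_dZrel_sq_le_two · v ω)
  refine ⟨Real.log (Znum X 0 v ω) + c, (tendsto_const_nhds.add hc).congr fun n => ?_⟩
  rw [log_Znum_eq_sum n, Yplus_eq_sum, Yminus_eq_sum, ← Finset.sum_add_distrib,
    Finset.sum_sub_distrib]
  simp only [dYplus_add_dYminus_eq_dZrel (hnear _)]
  ring

lemma exists_tendsto_log_Znum_sub_log_Znum_sub_Yminus
    (hnear : ∀ k, X (k + 1) ω = X k ω + 1 ∨ X (k + 1) ω = X k ω - 1) {x : ℤ} {p d : ℝ}
    (hp : Tendsto (fun n => Yplus X n x ω) atTop (𝓝 p))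
    (hd : Tendsto (fun n => Yminus X n (x + 2) ω - Yplus X n (x + 2) ω) atTop (𝓝 d)) :
    ∃ c, Tendsto (fun n => Real.log (Znum X n (x + 3) ω) - Real.log (Znum X n (x + 1) ω)
      - Yminus X n (x + 4) ω) atTop (𝓝 c) := by
  obtain ⟨c₁, hc₁⟩ := exists_tendsto_log_Znum_sub_crossings hnear (x + 1)
  obtain ⟨c₃, hc₃⟩ := exists_tendsto_log_Znum_sub_crossings hnear (x + 3)
  refine ⟨c₃ - c₁ - p - d, (((hc₃.sub hc₁).sub hp).sub hd).congr fun n => ?_⟩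
  rw [show x + 1 - 1 = x by ring, show x + 1 + 1 = x + 2 by ring, show x + 3 - 1 = x + 2 by ring,
    show x + 3 + 1 = x + 4 by ring]
  ring

lemma alphaMinus_eq_inv_one_add_exp (n : ℕ) (y : ℤ) (ω : Ω) :
    alphaMinus X n y ω
      = (1 + Real.exp (Real.log (Znum X n (y + 1) ω) - Real.log (Znum X n (y - 1) ω)))⁻¹ := by
  have h₁ := Znum_pos (X := X) n (y - 1) ω
  have h₂ := Znum_pos (X := X) n (y + 1) ω
  rw [Real.exp_sub, Real.exp_log h₁, Real.exp_log h₂, alphaMinus]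
  field_simp

end NearestNeighbour

/-- Corollary 3.1(ii)–(iii) of Tarrès: a.s. on `Υ(x)`, the limit
`α⁻_∞(x+2) = lim_n α⁻_n(x+2)` exists and lies in `[0,1)`; moreover on
`Υ(x) ∩ {α⁻_∞(x+2) > 0}` the event `Υ(x+4)` holds. -/
theorem alphaMinus_limit_and_propagation
    {Ω : Type*} {m0 : MeasurableSpace Ω} (μ : Measure Ω) [IsProbabilityMeasure μ]
    (ℱ : Filtration ℕ m0) (X : ℕ → Ω → ℤ) (v0 : ℤ) (h : IsVRRW μ ℱ X v0) (x : ℤ) :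
    ∀ᵐ ω ∂μ, ω ∈ Upsilon X x →
      ∃ l : ℝ, l ∈ Set.Ico (0 : ℝ) 1 ∧
        Tendsto (fun n => alphaMinus X n (x + 2) ω) atTop (nhds l) ∧
        (0 < l → ω ∈ Upsilon X (x + 4)) := by
  filter_upwards [ae_all_iff.2 h.nearest, ae_bddAbove_Yplus_of_mem_Upsilon h x,
    ae_exists_tendsto_Yminus_sub_Yplus h (x + 2), ae_mem_Upsilon_of_bddAbove_Yminus h (x + 4)]
    with ω hnear hplus ⟨d, hd⟩ hminus hΥ
  obtain ⟨c, hc⟩ := exists_tendsto_log_Znum_sub_log_Znum_sub_Yminus hnear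
    (tendsto_atTop_ciSup (Yplus_mono x ω) (hplus hΥ)) hd
  obtain ⟨l, hl, hlim, hpos⟩ := exists_tendsto_inv_one_add_exp hc (Yminus_mono (x + 4) ω)
  refine ⟨l, hl, hlim.congr fun n => ?_, fun hl0 => hminus (hpos hl0)⟩
  rw [sub_add_cancel, alphaMinus_eq_inv_one_add_exp, show x + 2 + 1 = x + 3 by ring,
    show x + 2 - 1 = x + 1 by ring]
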